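/- (Main theorem.) Let E be a finite nonempty linearly ordered set, I an irreflexive symmetric relation on E, and X^• a finite pointed M(E,I)-set with |X| = n+1, such that the action is full and satisfies the rooted-tree condition. Then for every s ≥ 1 there is an isomorphism of abelian groups H_s(A(X^•)) ≅ (H_s(K(E,I)))^{n+1} ⊕ ℤ^{p_s}, where p_s is the number of s-cliques. (In the paper's language: H_s(X_n^•; ℤ) ≅ (H̃_{s−1}(E,𝔐; ℤ))^{n+1} ⊕ ℤ^{p_s}, where H̃ denotes reduced homology of the clique complex of the commutation relation.) -/

import Mathlib

/-!
Common setup: free partially commutative monoid `M(E,I)` data, cliques of the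
commutation relation, the augmented clique chain complex `K(E,I)`, the chain
complexes `A(X^•)` and `B(X^•)` of a pointed `M(E,I)`-set, and their homology.

A pointed `M(E,I)`-set with underlying non-base part `X` is modelled as an
action `act : Option X → E → Option X`, where `none` is the base point `*`.
-/

namespace PCMHomology

variable {E : Type*} [LinearOrder E] [Fintype E]

/-- `S` is a clique for the relation `I`: distinct elements pairwise satisfy `I`. -/
def IsClique (I : E → E → Prop) (S : Finset E) : Prop :=
  ∀ a ∈ S, ∀ b ∈ S, a ≠ b → I a b

/-- The type of `s`-cliques: `s`-element subsets of `E` whose elements pairwise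
commute (satisfy `I`). -/
def Clique (I : E → E → Prop) (s : ℕ) : Type _ :=
  {S : Finset E // S.card = s ∧ IsClique I S}

/-- `p_s`, the number of `s`-cliques. -/
noncomputable def pClique (I : E → E → Prop) (s : ℕ) : ℕ :=
  Nat.card (Clique I s)

/-- Removing an element of an `(s+1)`-clique yields an `s`-clique. -/
def faceClique {I : E → E → Prop} {s : ℕ} (S : Clique I (s + 1))
    (e : {a // a ∈ S.val}) : Clique I s :=
  ⟨S.val.erase e.val, by
    refine ⟨?_, ?_⟩
    · rw [Finset.card_erase_of_mem e.property, S.property.1]; rfl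
    · intro a ha b hb hab
      exact S.property.2 a (Finset.mem_of_mem_erase ha) b
        (Finset.mem_of_mem_erase hb) hab⟩

/-- If `e` is the `k`-th element of the clique `S = {e_1 < ⋯ < e_{s+1}}` then
`posIdx S e = k - 1`, the number of elements of `S` smaller than `e`. -/
def posIdx {I : E → E → Prop} {s : ℕ} (S : Clique I (s + 1))
    (e : {a // a ∈ S.val}) : ℕ :=
  (S.val.filter (fun a => a < e.val)).card

/-- Degree-`s` component of the augmented clique chain complex `K(E,I)`:
the free abelian group on the `s`-cliques. -/
abbrev KC (I : E → E → Prop) (s : ℕ) : Type _ := Clique I s →₀ ℤ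

/-- The differential of `K(E,I)`:
`d (e_1,…,e_{s+1}) = ∑ (-1)^(k+1) (e_1,…,ê_k,…,e_{s+1})`. -/
noncomputable def Kd (I : E → E → Prop) (s : ℕ) : KC I (s + 1) →+ KC I s :=
  Finsupp.liftAddHom fun S => zmultiplesHom _
    (∑ e ∈ S.val.attach,
      ((-1 : ℤ) ^ posIdx S e) • Finsupp.single (faceClique S e) (1 : ℤ))

/-- Degree-`s` component of the chain complex `A(X^•)`: the free abelian group
on pairs `(x, S)` with `x ∈ X^•` (including the base point `* = none`) and `S`
an `s`-clique. -/
abbrev AC (I : E → E → Prop) (X : Type*) (s : ℕ) : Type _ :=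
  (Option X × Clique I s) →₀ ℤ

/-- The differential of `A(X^•)`:
`d (x; e_1,…,e_{s+1}) = ∑ (-1)^k ((x·e_k; …ê_k…) - (x; …ê_k…))`. -/
noncomputable def Ad (I : E → E → Prop) {X : Type*}
    (act : Option X → E → Option X) (s : ℕ) : AC I X (s + 1) →+ AC I X s :=
  Finsupp.liftAddHom fun p => zmultiplesHom _
    (∑ e ∈ p.2.val.attach, ((-1 : ℤ) ^ (posIdx p.2 e + 1)) •
      (Finsupp.single (act p.1 e.val, faceClique p.2 e) (1 : ℤ)
        - Finsupp.single (p.1, faceClique p.2 e) (1 : ℤ)))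

/-- Degree-`s` component of the chain complex `B(X^•)`: the free abelian group
on pairs `(x, S)` with `x ∈ X` (so `x ≠ *`) and `S` an `s`-clique. -/
abbrev BC (I : E → E → Prop) (X : Type*) (s : ℕ) : Type _ :=
  (X × Clique I s) →₀ ℤ

/-- The generator `(x·e; T)` of `B(X^•)`, interpreted as `0` when `x·e = *`. -/
noncomputable def bGen {I : E → E → Prop} {X : Type*} {s : ℕ} (o : Option X) (T : Clique I s) :
    BC I X s :=
  o.elim 0 (fun y => Finsupp.single (y, T) (1 : ℤ))

/-- The differential of `B(X^•)`:
`d (x; e_1,…,e_{s+1}) = ∑ (-1)^k ((x·e_k; …ê_k…) - (x; …ê_k…))`, with a term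
`(x·e_k; T)` interpreted as `0` when `x·e_k = *`. -/
noncomputable def Bd (I : E → E → Prop) {X : Type*}
    (act : Option X → E → Option X) (s : ℕ) : BC I X (s + 1) →+ BC I X s :=
  Finsupp.liftAddHom fun p => zmultiplesHom _
    (∑ e ∈ p.2.val.attach, ((-1 : ℤ) ^ (posIdx p.2 e + 1)) •
      (bGen (act (some p.1) e.val) (faceClique p.2 e)
        - Finsupp.single (p.1, faceClique p.2 e) (1 : ℤ)))

/-- Homology at `C1` of `C2 -d2→ C1 -d1→ C0`: the kernel of `d1` modulo (its
intersection with) the image of `d2`. -/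
abbrev homologyOf {C2 C1 C0 : Type*} [AddCommGroup C2] [AddCommGroup C1]
    [AddCommGroup C0] (d1 : C1 →+ C0) (d2 : C2 →+ C1) : Type _ :=
  d1.ker ⧸ ((d2.range).addSubgroupOf d1.ker)

/-- The homology groups of a nonnegatively graded chain complex `(C, d)`;
in degree `0` this is `C 0 / im (d 0)`. -/
def Hmlgy (C : ℕ → Type*) [∀ n, AddCommGroup (C n)]
    (d : ∀ n, C (n + 1) →+ C n) : ℕ → Type _
  | 0 => homologyOf (0 : C 0 →+ PUnit.{1}) (d 0)
  | (s + 1) => homologyOf (d s) (d (s + 1))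

instance hmlgyAddCommGroup (C : ℕ → Type*) [∀ n, AddCommGroup (C n)]
    (d : ∀ n, C (n + 1) →+ C n) : ∀ s, AddCommGroup (Hmlgy C d s)
  | 0 => inferInstanceAs (AddCommGroup (homologyOf (0 : C 0 →+ PUnit.{1}) (d 0)))
  | (s + 1) => inferInstanceAs (AddCommGroup (homologyOf (d s) (d (s + 1))))

end PCMHomology

/-!
Sending `(x; S)` to `(S, [x])`, with `[*] = 0`, splits `A(X^•)` as the clique complex `K(E,I)`
with zero differential (contributing `ℤ^{p_s}`) plus the complex `B(X^•)` on the non-base points.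
Since the action is full, all generators act by one map `f`, and the differential of `B(X^•)`
factors as `(1 - T) ∘ D = D ∘ (1 - T)`, where `D` is the differential of `K(E,I)` applied to each
of the `|X| = n + 1` summands `K(E,I) ⊗ x` and `T` is induced by `f`. The rooted-tree condition
says that `f` sends every point to `*` after finitely many steps, so `T` is nilpotent and
`1 - T` is invertible; hence `B(X^•)` has the homology of `K(E,I)^{n+1}`.
-/

namespace PCMHomology

section HomologyOf

variable {ι : Type*} {C2 C1 C0 C2' C1' C0' : Type*} [AddCommGroup C2] [AddCommGroup C1]
  [AddCommGroup C0] [AddCommGroup C2'] [AddCommGroup C1'] [AddCommGroup C0']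

noncomputable def kerCongr (f : C1 →+ C0) (f' : C1' →+ C0') (e1 : C1 ≃+ C1') (e0 : C0 ≃+ C0')
    (h : ∀ x, e0 (f x) = f' (e1 x)) : f.ker ≃+ f'.ker :=
  (AddSubgroup.equivMapOfInjective f.ker e1.toAddMonoidHom e1.injective).trans
    (AddEquiv.addSubgroupCongr <| by
      ext y
      have := h (e1.symm y)
      rw [e1.apply_symm_apply] at this
      simp only [AddSubgroup.mem_map_equiv, AddMonoidHom.mem_ker, ← this,
        AddEquivClass.map_eq_zero_iff])

noncomputable def homologyOfCongr {d1 : C1 →+ C0} {d2 : C2 →+ C1}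
    {d1' : C1' →+ C0'} {d2' : C2' →+ C1'}
    (e2 : C2 ≃+ C2') (e1 : C1 ≃+ C1') (e0 : C0 ≃+ C0')
    (h1 : ∀ x, e0 (d1 x) = d1' (e1 x)) (h2 : ∀ x, e1 (d2 x) = d2' (e2 x)) :
    homologyOf d1 d2 ≃+ homologyOf d1' d2' :=
  QuotientAddGroup.congr _ _ (kerCongr d1 d1' e1 e0 h1) <| by
    ext y
    simp only [AddSubgroup.mem_map, AddSubgroup.mem_addSubgroupOf, AddMonoidHom.mem_range]
    constructor
    · rintro ⟨x, ⟨w, hw⟩, rfl⟩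
      exact ⟨e2 w, by rw [← h2, hw]; rfl⟩
    · rintro ⟨w, hw⟩
      refine ⟨(kerCongr d1 d1' e1 e0 h1).symm y, ⟨e2.symm w, ?_⟩, by simp⟩
      apply e1.injective
      rw [h2, e2.apply_symm_apply, hw]
      exact congrArg Subtype.val ((kerCongr d1 d1' e1 e0 h1).apply_symm_apply y).symm

noncomputable def homologyOfEquivOfSurjective {G : Type*} [AddCommGroup G]
    (d1 : C1 →+ C0) (d2 : C2 →+ C1) (φ : d1.ker →+ G) (hφ : Function.Surjective φ)
    (hker : φ.ker = d2.range.addSubgroupOf d1.ker) :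
    homologyOf d1 d2 ≃+ G :=
  (QuotientAddGroup.quotientAddEquivOfEq hker.symm).trans
    (QuotientAddGroup.quotientKerEquivOfSurjective φ hφ)

noncomputable def homologyOfZeroEquiv : homologyOf (0 : C1 →+ C0) (0 : C2 →+ C1) ≃+ C1 :=
  homologyOfEquivOfSurjective _ _ (AddMonoidHom.ker 0).subtype
    (fun x => ⟨⟨x, rfl⟩, rfl⟩) (by ext; simp)

noncomputable def homologyOfProdEquiv (d1 : C1 →+ C0) (d2 : C2 →+ C1)
    (d1' : C1' →+ C0') (d2' : C2' →+ C1') :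
    homologyOf (d1.prodMap d1') (d2.prodMap d2') ≃+ homologyOf d1 d2 × homologyOf d1' d2' :=
  homologyOfEquivOfSurjective _ _
    (((QuotientAddGroup.mk' _).comp ((AddMonoidHom.fst _ _).comp (d1.prodMap d1').ker.subtype
        |>.codRestrict d1.ker fun x => congrArg Prod.fst x.2)).prod
      ((QuotientAddGroup.mk' _).comp ((AddMonoidHom.snd _ _).comp (d1.prodMap d1').ker.subtype
        |>.codRestrict d1'.ker fun x => congrArg Prod.snd x.2)))
    (by
      rintro ⟨⟨a, ha⟩, ⟨b, hb⟩⟩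
      exact ⟨⟨(a, b), Prod.ext ha hb⟩, rfl⟩)
    (by
      ext ⟨⟨a, b⟩, hab⟩
      simp [AddSubgroup.mem_addSubgroupOf, QuotientAddGroup.eq_zero_iff, AddSubgroup.mem_prod]
      rfl)

noncomputable def homologyOfPiEquiv (d1 : C1 →+ C0) (d2 : C2 →+ C1) :
    homologyOf (d1.compLeft ι) (d2.compLeft ι) ≃+ (ι → homologyOf d1 d2) :=
  homologyOfEquivOfSurjective _ _
    (AddMonoidHom.pi fun i => (QuotientAddGroup.mk' _).comp
      ((Pi.evalAddMonoidHom _ i).comp (d1.compLeft ι).ker.subtype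
        |>.codRestrict d1.ker fun x => congrFun x.2 i))
    (by
      intro v
      choose a ha using fun i => QuotientAddGroup.mk_surjective (v i)
      exact ⟨⟨fun i => a i, funext fun i => (a i).2⟩, funext ha⟩)
    (by
      ext x
      simp only [AddMonoidHom.mem_ker, AddSubgroup.mem_addSubgroupOf, AddMonoidHom.mem_range,
        funext_iff, AddMonoidHom.pi_apply, AddMonoidHom.comp_apply, QuotientAddGroup.mk'_apply,
        Pi.zero_apply, QuotientAddGroup.eq_zero_iff, AddMonoidHom.compLeft_apply,
        Function.comp_apply]
      exact Classical.skolem)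

noncomputable def homologyOfTwistEquiv {d1 : C1 →+ C0} {d2 : C2 →+ C1}
    {d1' : C1 →+ C0} {d2' : C2 →+ C1} (u1 : C1 ≃+ C1) (u2 : C2 ≃+ C2)
    (h1 : ∀ a, d1' a = d1 (u1 a)) (h2 : ∀ a, d2' a = d2 (u2 a))
    (hu : ∀ a, u1 (d2 a) = d2 (u2 a)) :
    homologyOf d1' d2' ≃+ homologyOf d1 d2 :=
  -- `(u2 ∘ u2, u1, id)` is a chain isomorphism from `(d1', d2')` to `(d1, d2)`.
  homologyOfCongr (u2.trans u2) u1 (.refl _) h1 fun a => by rw [h2, hu]; rfl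

end HomologyOf

section Finsupp

variable {α M : Type*} [AddCommGroup M]

lemma liftAddHom_zmultiplesHom_single (v : α → M) (a : α) :
    Finsupp.liftAddHom (fun a => zmultiplesHom M (v a)) (Finsupp.single a 1) = v a := by
  simp

lemma addHom_ext_single_one {f g : (α →₀ ℤ) →+ M}
    (h : ∀ a, f (Finsupp.single a 1) = g (Finsupp.single a 1)) : f = g :=
  Finsupp.addHom_ext' fun a => AddMonoidHom.ext_int (h a)

lemma addHom_apply_eq_of_single_one {f g : (α →₀ ℤ) →+ M}
    (h : ∀ a, f (Finsupp.single a 1) = g (Finsupp.single a 1)) (v : α →₀ ℤ) : f v = g v :=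
  DFunLike.congr_fun (addHom_ext_single_one h) v

end Finsupp

section Complexes

variable {E : Type*} {I : E → E → Prop} {X : Type*}

@[simp] lemma bGen_none {s : ℕ} (T : Clique I s) : (bGen none T : BC I X s) = 0 := rfl

@[simp] lemma bGen_some {s : ℕ} (x : X) (T : Clique I s) :
    (bGen (some x) T : BC I X s) = Finsupp.single (x, T) 1 := rfl

section Splitting

variable (I X)

noncomputable def toKC (s : ℕ) : AC I X s →+ KC I s := Finsupp.mapDomain.addMonoidHom Prod.snd

noncomputable def ofKC (s : ℕ) : KC I s →+ AC I X s :=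
  Finsupp.mapDomain.addMonoidHom (Prod.mk none)

noncomputable def toBC (s : ℕ) : AC I X s →+ BC I X s :=
  Finsupp.liftAddHom fun p => zmultiplesHom _ (bGen p.1 p.2)

noncomputable def ofBC (s : ℕ) : BC I X s →+ AC I X s :=
  Finsupp.liftAddHom fun p => zmultiplesHom _
    (Finsupp.single (some p.1, p.2) 1 - Finsupp.single (none, p.2) 1)

variable {I X}

@[simp] lemma toKC_single {s : ℕ} (o : Option X) (S : Clique I s) :
    toKC I X s (Finsupp.single (o, S) 1) = Finsupp.single S 1 :=
  Finsupp.mapDomain_single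

@[simp] lemma ofKC_single {s : ℕ} (S : Clique I s) :
    ofKC I X s (Finsupp.single S 1) = Finsupp.single (none, S) 1 :=
  Finsupp.mapDomain_single

@[simp] lemma toBC_single {s : ℕ} (o : Option X) (S : Clique I s) :
    toBC I X s (Finsupp.single (o, S) 1) = bGen o S :=
  liftAddHom_zmultiplesHom_single _ _

@[simp] lemma ofBC_single {s : ℕ} (x : X) (S : Clique I s) :
    ofBC I X s (Finsupp.single (x, S) 1) =
      Finsupp.single (some x, S) 1 - Finsupp.single (none, S) 1 :=
  liftAddHom_zmultiplesHom_single _ _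

variable (I X) in
noncomputable def acEquiv (s : ℕ) : AC I X s ≃+ KC I s × BC I X s :=
  AddMonoidHom.toAddEquiv ((toKC I X s).prod (toBC I X s)) ((ofKC I X s).coprod (ofBC I X s))
    (addHom_ext_single_one fun ⟨o, S⟩ => by cases o <;> simp)
    (AddMonoidHom.ext fun ⟨c, b⟩ => by
      have h1 := addHom_apply_eq_of_single_one (f := (toKC I X s).comp (ofKC I X s))
        (g := .id _) (fun _ => by simp) c
      have h2 := addHom_apply_eq_of_single_one (f := (toKC I X s).comp (ofBC I X s))
        (g := 0) (fun ⟨_, _⟩ => by simp) b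
      have h3 := addHom_apply_eq_of_single_one (f := (toBC I X s).comp (ofKC I X s))
        (g := 0) (fun _ => by simp) c
      have h4 := addHom_apply_eq_of_single_one (f := (toBC I X s).comp (ofBC I X s))
        (g := .id _) (fun ⟨_, _⟩ => by simp) b
      simp_all)

end Splitting

variable (I) in
noncomputable def bShift (f : Option X → Option X) (s : ℕ) : AddMonoid.End (BC I X s) :=
  Finsupp.liftAddHom fun p => zmultiplesHom _ (bGen (f (some p.1)) p.2)

lemma bShift_single (f : Option X → Option X) {s : ℕ} (x : X) (T : Clique I s) :
    bShift I f s (Finsupp.single (x, T) 1) = bGen (f (some x)) T :=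
  liftAddHom_zmultiplesHom_single _ _

section Shift

variable {f : Option X → Option X} (hf : f none = none)
include hf

lemma bShift_bGen {s : ℕ} (o : Option X) (T : Clique I s) :
    bShift I f s (bGen o T) = bGen (f o) T := by
  cases o
  · rw [hf, bGen_none, map_zero]
  · exact bShift_single f _ T

lemma bShift_pow_bGen {s : ℕ} (k : ℕ) (o : Option X) (T : Clique I s) :
    (bShift I f s ^ k) (bGen o T) = bGen (f^[k] o) T := by
  rw [AddMonoid.End.coe_pow]
  induction k with
  | zero => rfl
  | succ k ih => rw [Function.iterate_succ_apply', ih, bShift_bGen hf, Function.iterate_succ_apply']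

lemma isNilpotent_bShift [Finite X] (hnil : ∀ x : X, ∃ k, f^[k] (some x) = none) (s : ℕ) :
    IsNilpotent (bShift I f s) := by
  have : Fintype X := Fintype.ofFinite X
  choose k hk using hnil
  refine ⟨Finset.univ.sup k, ?_⟩
  change ((bShift I f s ^ Finset.univ.sup k : AddMonoid.End _) : BC I X s →+ BC I X s) = 0
  refine addHom_ext_single_one fun ⟨x, S⟩ => ?_
  obtain ⟨c, hc⟩ := Nat.exists_eq_add_of_le (Finset.le_sup (f := k) (Finset.mem_univ x))
  refine (bShift_pow_bGen hf _ (some x) S).trans ?_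
  rw [hc, add_comm, Function.iterate_add_apply, hk, Function.iterate_fixed hf]
  rfl

end Shift

section Fibres

variable [Finite X]

variable (I X) in
noncomputable def bcEquivPi (s : ℕ) : BC I X s ≃+ (X → KC I s) :=
  Finsupp.curryAddEquiv.trans (Finsupp.linearEquivFunOnFinite ℤ (KC I s) X).toAddEquiv

lemma bcEquivPi_single [DecidableEq X] {s : ℕ} (x : X) (S : Clique I s) :
    bcEquivPi I X s (Finsupp.single (x, S) 1) = Pi.single x (Finsupp.single S 1) := by
  simp [bcEquivPi, Finsupp.curry_single]

end Fibres

variable [LinearOrder E]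

@[simp] lemma Kd_single (s : ℕ) (S : Clique I (s + 1)) :
    Kd I s (Finsupp.single S 1) =
      ∑ e ∈ S.val.attach, ((-1 : ℤ) ^ posIdx S e) • Finsupp.single (faceClique S e) 1 :=
  liftAddHom_zmultiplesHom_single _ _

@[simp] lemma Ad_single (act : Option X → E → Option X) (s : ℕ) (o : Option X)
    (S : Clique I (s + 1)) :
    Ad I act s (Finsupp.single (o, S) 1) =
      ∑ e ∈ S.val.attach, ((-1 : ℤ) ^ (posIdx S e + 1)) •
        (Finsupp.single (act o e.val, faceClique S e) 1 - Finsupp.single (o, faceClique S e) 1) :=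
  liftAddHom_zmultiplesHom_single _ _

@[simp] lemma Bd_single (act : Option X → E → Option X) (s : ℕ) (x : X)
    (S : Clique I (s + 1)) :
    Bd I act s (Finsupp.single (x, S) 1) =
      ∑ e ∈ S.val.attach, ((-1 : ℤ) ^ (posIdx S e + 1)) •
        (bGen (act (some x) e.val) (faceClique S e) - Finsupp.single (x, faceClique S e) 1) :=
  liftAddHom_zmultiplesHom_single _ _

lemma toKC_Ad (act : Option X → E → Option X) (s : ℕ) (a : AC I X (s + 1)) :
    toKC I X s (Ad I act s a) = 0 :=
  addHom_apply_eq_of_single_one (f := (toKC I X s).comp (Ad I act s)) (g := 0)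
    (fun ⟨_, _⟩ => by simp) a

lemma toBC_Ad {act : Option X → E → Option X} (hstar : ∀ e, act none e = none) (s : ℕ)
    (a : AC I X (s + 1)) :
    toBC I X s (Ad I act s a) = Bd I act s (toBC I X (s + 1) a) :=
  addHom_apply_eq_of_single_one (f := (toBC I X s).comp (Ad I act s))
    (g := (Bd I act s).comp (toBC I X (s + 1))) (fun ⟨o, _⟩ => by cases o <;> simp [hstar]) a

noncomputable def homologyOfAdEquiv {act : Option X → E → Option X}
    (hstar : ∀ e, act none e = none) (m : ℕ) :
    homologyOf (Ad I act m) (Ad I act (m + 1)) ≃+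
      KC I (m + 1) × homologyOf (Bd I act m) (Bd I act (m + 1)) :=
  have hA : ∀ s a, acEquiv I X s (Ad I act s a) =
      (0 : KC I (s + 1) →+ KC I s).prodMap (Bd I act s) (acEquiv I X (s + 1) a) :=
    fun s a => Prod.ext (toKC_Ad act s a) (toBC_Ad hstar s a)
  (homologyOfCongr (acEquiv I X (m + 2)) (acEquiv I X (m + 1)) (acEquiv I X m)
    (hA m) (hA (m + 1))).trans
    ((homologyOfProdEquiv _ _ _ _).trans (homologyOfZeroEquiv.prodCongr (.refl _)))

variable (I X) in
noncomputable def fibreKd (s : ℕ) : BC I X (s + 1) →+ BC I X s :=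
  Finsupp.liftAddHom fun p => zmultiplesHom _
    (∑ e ∈ p.2.val.attach,
      ((-1 : ℤ) ^ posIdx p.2 e) • Finsupp.single (p.1, faceClique p.2 e) 1)

lemma fibreKd_bGen (s : ℕ) (o : Option X) (S : Clique I (s + 1)) :
    fibreKd I X s (bGen o S) =
      ∑ e ∈ S.val.attach, ((-1 : ℤ) ^ posIdx S e) • bGen o (faceClique S e) := by
  cases o
  · simp
  · exact liftAddHom_zmultiplesHom_single _ _

lemma bShift_fibreKd {f : Option X → Option X} (hf : f none = none) (s : ℕ)
    (a : BC I X (s + 1)) :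
    bShift I f s (fibreKd I X s a) = fibreKd I X s (bShift I f (s + 1) a) := by
  refine DFunLike.congr_fun (addHom_ext_single_one (f := (bShift I f s).comp (fibreKd I X s))
    (g := (fibreKd I X s).comp (bShift I f (s + 1))) fun ⟨x, S⟩ => ?_) a
  show bShift I f s (fibreKd I X s (bGen (some x) S)) =
    fibreKd I X s (bShift I f (s + 1) (bGen (some x) S))
  simp only [fibreKd_bGen, map_sum, map_zsmul, bShift_bGen hf]

lemma Bd_eq_fibreKd_sub_bShift {act : Option X → E → Option X} {f : Option X → Option X}
    (hact : ∀ o e, act o e = f o) (s : ℕ) (a : BC I X (s + 1)) :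
    Bd I act s a = fibreKd I X s (a - bShift I f (s + 1) a) := by
  refine DFunLike.congr_fun (addHom_ext_single_one (f := Bd I act s)
    (g := (fibreKd I X s).comp (1 - bShift I f (s + 1) : AddMonoid.End _)) fun ⟨x, S⟩ => ?_) a
  show _ = fibreKd I X s (bGen (some x) S - bShift I f (s + 1) (Finsupp.single (x, S) 1))
  rw [Bd_single, bShift_single, map_sub, fibreKd_bGen, fibreKd_bGen, ← Finset.sum_sub_distrib]
  refine Finset.sum_congr rfl fun e _ => ?_
  rw [hact, pow_succ, mul_neg_one, neg_smul, ← smul_neg, neg_sub, smul_sub, bGen_some]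

noncomputable def homologyOfBdEquiv {act : Option X → E → Option X} {f : Option X → Option X}
    (hf : f none = none) (hact : ∀ o e, act o e = f o) (hT : ∀ t, IsNilpotent (bShift I f t))
    (m : ℕ) :
    homologyOf (Bd I act m) (Bd I act (m + 1)) ≃+
      homologyOf (fibreKd I X m) (fibreKd I X (m + 1)) :=
  let u t : BC I X t ≃+ BC I X t := DistribMulAction.toAddAut _ _ (hT t).isUnit_one_sub.unit
  homologyOfTwistEquiv (u (m + 1)) (u (m + 2)) (Bd_eq_fibreKd_sub_bShift hact m)
    (Bd_eq_fibreKd_sub_bShift hact (m + 1)) fun a => by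
      show fibreKd I X (m + 1) a - bShift I f (m + 1) (fibreKd I X (m + 1) a) =
        fibreKd I X (m + 1) (a - bShift I f (m + 2) a)
      rw [map_sub, bShift_fibreKd hf]

section Fibres

variable [Finite X]

lemma bcEquivPi_fibreKd (s : ℕ) (a : BC I X (s + 1)) :
    bcEquivPi I X s (fibreKd I X s a) = (Kd I s).compLeft X (bcEquivPi I X (s + 1) a) := by
  classical
  refine DFunLike.congr_fun (addHom_ext_single_one
    (f := (bcEquivPi I X s).toAddMonoidHom.comp (fibreKd I X s))
    (g := ((Kd I s).compLeft X).comp (bcEquivPi I X (s + 1)).toAddMonoidHom)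
    fun ⟨x, S⟩ => ?_) a
  show bcEquivPi I X s (fibreKd I X s (bGen (some x) S)) =
    (Kd I s).compLeft X (bcEquivPi I X (s + 1) (Finsupp.single (x, S) 1))
  rw [fibreKd_bGen]
  simp only [map_sum, map_zsmul, bGen_some, bcEquivPi_single]
  funext y
  rcases eq_or_ne y x with rfl | hy <;> simp [*]

noncomputable def homologyOfFibreKdEquiv (m : ℕ) :
    homologyOf (fibreKd I X m) (fibreKd I X (m + 1)) ≃+
      (X → homologyOf (Kd I m) (Kd I (m + 1))) :=
  (homologyOfCongr (bcEquivPi I X (m + 2)) (bcEquivPi I X (m + 1)) (bcEquivPi I X m)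
    (bcEquivPi_fibreKd m) (bcEquivPi_fibreKd (m + 1))).trans (homologyOfPiEquiv _ _)

end Fibres

end Complexes

instance {E : Type*} [Fintype E] (I : E → E → Prop) (s : ℕ) : Finite (Clique I s) :=
  inferInstanceAs (Finite {S : Finset E // S.card = s ∧ IsClique I S})

noncomputable def kcEquivFin {E : Type*} [Fintype E] (I : E → E → Prop) (s : ℕ) :
    KC I s ≃+ (Fin (pClique I s) → ℤ) :=
  (Finsupp.linearEquivFunOnFinite ℤ ℤ (Clique I s)).toAddEquiv.trans
    (AddEquiv.arrowCongr (Finite.equivFin _) (.refl ℤ))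

theorem stmt8_general {E : Type*} [LinearOrder E] [Fintype E]
    (I : E → E → Prop)
    (X : Type*) [Fintype X] (n : ℕ) (hcard : Fintype.card X = n + 1)
    (act : Option X → E → Option X)
    (hstar : ∀ e, act none e = none)
    (hfull : ∀ o e e', act o e = act o e')
    (e0 : E)
    (htree : ∀ x : X, ∃ k : ℕ, (fun o => act o e0)^[k] (some x) = none) :
    ∀ s : ℕ, 1 ≤ s → Nonempty
      (Hmlgy (AC I X) (Ad I act) s ≃+
        (Fin (n + 1) → Hmlgy (KC I) (Kd I) s) × (Fin (pClique I s) → ℤ)) := by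
  intro s hs
  obtain ⟨m, rfl⟩ := Nat.exists_eq_add_of_le' hs
  have hT : ∀ t, IsNilpotent (bShift I (fun o => act o e0) t) :=
    isNilpotent_bShift (hstar e0) htree
  have hB := homologyOfBdEquiv (hstar e0) (fun o e => hfull o e e0) hT m
  exact ⟨(homologyOfAdEquiv hstar m).trans <| AddEquiv.prodComm.trans <|
    (hB.trans <| (homologyOfFibreKdEquiv m).trans <|
      .arrowCongr (Fintype.equivFinOfCardEq hcard) (.refl _)).prodCongr (kcEquivFin I (m + 1))⟩

/-- **Main theorem.** Let `X^•` be a finite pointed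
`M(E,I)`-set with `|X| = n + 1`, with full action satisfying the rooted-tree
condition. Then for every `s ≥ 1`,
`H_s(A(X^•)) ≅ (H_s(K(E,I)))^{n+1} ⊕ ℤ^{p_s}`, where `p_s` is the number of
`s`-cliques; that is, `H_s(X_n^•; ℤ) ≅ (H̃_{s-1}(E,𝔐; ℤ))^{n+1} ⊕ ℤ^{p_s}`. -/
theorem stmt8 {E : Type*} [LinearOrder E] [Fintype E] [Nonempty E]
    (I : E → E → Prop) (hirr : ∀ e, ¬ I e e) (hsym : ∀ e e', I e e' → I e' e)
    (X : Type*) [Fintype X] (n : ℕ) (hcard : Fintype.card X = n + 1)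
    (act : Option X → E → Option X)
    (hstar : ∀ e, act none e = none)
    (hcomm : ∀ o e e', I e e' → act (act o e) e' = act (act o e') e)
    (hfull : ∀ o e e', act o e = act o e')
    (e0 : E)
    (htree : ∀ x : X, ∃ k : ℕ, (fun o => act o e0)^[k] (some x) = none) :
    ∀ s : ℕ, 1 ≤ s → Nonempty
      (Hmlgy (AC I X) (Ad I act) s ≃+
        (Fin (n + 1) → Hmlgy (KC I) (Kd I) s) × (Fin (pClique I s) → ℤ)) :=
  stmt8_general I X n hcard act hstar hfull e0 htree

end PCMHomology
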